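/- If A is an integral domain, then the commutant of Ã in A ⋊_α^σ G equals { ∑_s r_s s̅ : r_s = 0 whenever σ_s ≠ id_A }, i.e. the set of elements supported on σ⁻¹(id_A) = {g ∈ G : σ_g = id_A}. -/
import Mathlib


/-- A `G`-crossed system `{A, G, σ, α}`: a unital ring `A`, a group `G`,
`σ : G → Aut(A)` and a `σ`-cocycle `α : G × G → U(A)` satisfying the
crossed-system axioms (i)-(iii). -/
structure CrossedSystem (A : Type*) [Ring A] (G : Type*) [Group G] where
  σ : G → RingAut A
  α : G → G → Aˣ
  compat : ∀ x y : G, ∀ a : A,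
    σ x (σ y a) = (α x y : A) * σ (x * y) a * ((α x y)⁻¹ : Aˣ)
  cocycle : ∀ x y z : G,
    (α x y : A) * (α (x * y) z : A) = σ x (α y z : A) * (α x (y * z) : A)
  unit_right : ∀ x : G, α x 1 = 1
  unit_left : ∀ x : G, α 1 x = 1

variable {A : Type*} [CommRing A] {G : Type*} [Group G]

/-- Multiplication of the crossed product `A ⋊_α^σ G`, realized on the free
left `A`-module `G →₀ A`: `(a x̄)(b ȳ) = a σ_x(b) α(x,y) (x*y)‾`. -/
noncomputable def cmul (C : CrossedSystem A G) (f g : G →₀ A) : G →₀ A :=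
  f.sum fun s a => g.sum fun t b =>
    Finsupp.single (s * t) (a * C.σ s b * (C.α s t : A))

/-- The element `1_A ē` of the crossed product. -/
noncomputable def cone : G →₀ A := Finsupp.single 1 1

/-- The canonical embedding `ι : A → A ⋊_α^σ G`, `a ↦ a ē`; its range is `Ã`. -/
noncomputable def cemb (a : A) : G →₀ A := Finsupp.single 1 a

/-- The commutant `Comm(Ã)` of the embedded base ring in the crossed product. -/
noncomputable def cCommutant (C : CrossedSystem A G) : Set (G →₀ A) :=
  {x | ∀ a : A, cmul C (cemb a) x = cmul C x (cemb a)}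

/-- `I` is a (non-unital) two-sided ideal of the crossed product `A ⋊_α^σ G`. -/
def cIsIdeal (C : CrossedSystem A G) (I : Set (G →₀ A)) : Prop :=
  0 ∈ I ∧ (∀ x ∈ I, ∀ y ∈ I, x + y ∈ I) ∧ (∀ x ∈ I, -x ∈ I) ∧
    (∀ x ∈ I, ∀ y : G →₀ A, cmul C y x ∈ I ∧ cmul C x y ∈ I)

lemma sigma_one (C : CrossedSystem A G) (a : A) : C.σ 1 a = a := by
  have h := C.compat 1 1 a
  simp [C.unit_left] at h
  exact h

lemma left_apply (C : CrossedSystem A G) (a : A) (x : G →₀ A) (s : G) :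
    cmul C (cemb a) x s = a * x s := by
  classical
  rw [cmul, cemb, Finsupp.sum_single_index]
  · rw [Finsupp.sum_apply]
    simp only [one_mul, sigma_one, C.unit_left, Units.val_one, mul_one, Finsupp.single_apply]
    rw [Finsupp.sum_ite_eq' x s (fun t b => a * b)]
    split
    · rfl
    · next h => rw [Finsupp.notMem_support_iff.mp h, mul_zero]
  · simp

lemma right_apply (C : CrossedSystem A G) (a : A) (x : G →₀ A) (s : G) :
    cmul C x (cemb a) s = x s * C.σ s a := by
  classical
  rw [cmul, cemb]
  have key : ∀ (s' : G) (b : A),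
      ((Finsupp.single (1:G) a).sum fun t b' =>
        Finsupp.single (s' * t) (b * C.σ s' b' * (C.α s' t : A)))
        = Finsupp.single s' (b * C.σ s' a) := by
    intro s' b
    rw [Finsupp.sum_single_index] <;> simp [C.unit_right]
  simp only [key]
  rw [Finsupp.sum_apply]
  simp only [Finsupp.single_apply]
  rw [Finsupp.sum_ite_eq' x s (fun t b => b * C.σ t a)]
  split
  · rfl
  · next h => rw [Finsupp.notMem_support_iff.mp h, zero_mul]


theorem stmt_14 [IsDomain A] (C : CrossedSystem A G) :
    cCommutant C = {x : G →₀ A | ∀ s : G, (∃ a : A, C.σ s a ≠ a) → x s = 0} := by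
  ext x
  simp only [cCommutant, Set.mem_setOf_eq]
  constructor
  · rintro h s ⟨a, ha⟩
    have := congrFun (congrArg (⇑) (h a)) s
    rw [left_apply, right_apply] at this
    have h2 : x s * (C.σ s a - a) = 0 := by linear_combination -this
    rcases mul_eq_zero.mp h2 with h3 | h3
    · exact h3
    · exact absurd (sub_eq_zero.mp h3) ha
  · intro h a
    ext s
    rw [left_apply, right_apply]
    by_cases hs : ∃ b : A, C.σ s b ≠ b
    · rw [h s hs]; ring
    · push_neg at hs
      rw [hs a, mul_comm]
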